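/- Let u be a recurrent infinite word and w a maximal right special factor of u such that for every b ∈ E_r(w) there exists a unique return word of w starting with b. Then u is eventually periodic. -/
import Mathlib


variable {A : Type*}

/-- The factor of `u` of length `n` starting at position `j`. -/
def factorAt (u : ℕ → A) (j n : ℕ) : List A :=
  (List.range n).map (fun i => u (j + i))

/-- `j` is an occurrence of the finite word `w` in `u`. -/
def OccursAt (u : ℕ → A) (w : List A) (j : ℕ) : Prop :=
  factorAt u j w.length = w

/-- `w` is a factor of the infinite word `u`. -/
def IsFactor (u : ℕ → A) (w : List A) : Prop :=
  ∃ j, OccursAt u w j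

/-- `v` is a return word of `w` in `u`: the word between two successive occurrences of `w`. -/
def IsReturnWord (u : ℕ → A) (w v : List A) : Prop :=
  ∃ j k, j < k ∧ OccursAt u w j ∧ OccursAt u w k ∧
    (∀ l, j < l → l < k → ¬ OccursAt u w l) ∧ v = factorAt u j (k - j)

/-- The set `R(w)` of return words of `w` in `u`. -/
def returnWords (u : ℕ → A) (w : List A) : Set (List A) :=
  {v | IsReturnWord u w v}

/-- Property `R_m`: every factor of `u` has exactly `m` return words. -/
def PropertyR (u : ℕ → A) (m : ℕ) : Prop :=
  ∀ w, IsFactor u w → (returnWords u w).Finite ∧ (returnWords u w).ncard = m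

/-- The set of left extensions of `w`. -/
def leftExt (u : ℕ → A) (w : List A) : Set A := {a | IsFactor u (a :: w)}

/-- The set of right extensions of `w`. -/
def rightExt (u : ℕ → A) (w : List A) : Set A := {b | IsFactor u (w ++ [b])}

def LeftSpecial (u : ℕ → A) (w : List A) : Prop := 2 ≤ (leftExt u w).ncard

def RightSpecial (u : ℕ → A) (w : List A) : Prop := 2 ≤ (rightExt u w).ncard

/-- The set of pairs `(a, b)` such that `a w b` is a factor of `u`. -/
def extPairs (u : ℕ → A) (w : List A) : Set (A × A) :=
  {p | IsFactor u (p.1 :: (w ++ [p.2]))}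

/-- The bilateral order `B(w)`. -/
noncomputable def bilateralOrder (u : ℕ → A) (w : List A) : ℤ :=
  ((extPairs u w).ncard : ℤ) - (leftExt u w).ncard - (rightExt u w).ncard + 1

/-- `w` is a weak bispecial factor of `u`. -/
def WeakBispecial (u : ℕ → A) (w : List A) : Prop :=
  IsFactor u w ∧ bilateralOrder u w < 0

/-- The factor complexity of `u`. -/
noncomputable def Complexity (u : ℕ → A) (n : ℕ) : ℕ :=
  {w : List A | w.length = n ∧ IsFactor u w}.ncard

/-- `u` is recurrent: every factor occurs at least twice. -/
def Recurrent (u : ℕ → A) : Prop :=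
  ∀ w, IsFactor u w → ∃ j k, j < k ∧ OccursAt u w j ∧ OccursAt u w k

/-- `u` is uniformly recurrent. -/
def UniformlyRecurrent (u : ℕ → A) : Prop :=
  ∀ n : ℕ, ∃ N : ℕ, ∀ w, IsFactor u w → w.length = N →
    ∀ v, IsFactor u v → v.length = n → v <:+: w

def EventuallyPeriodic (u : ℕ → A) : Prop :=
  ∃ p, 0 < p ∧ ∃ N, ∀ n, N ≤ n → u (n + p) = u n

/-- `w` is a maximal right special factor. -/
def MaximalRightSpecial (u : ℕ → A) (w : List A) : Prop :=
  IsFactor u w ∧ RightSpecial u w ∧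
    ∀ v, IsFactor u v → RightSpecial u v → w <:+ v → v = w

/-- The return word `v` of `w` starts with the letter `b`. -/
def StartsWithLetter (w v : List A) (b : A) : Prop := (w ++ [b]) <+: (v ++ w)
section Aux

lemma factorAt_length (u : ℕ → A) (j n : ℕ) : (factorAt u j n).length = n := by
  simp [factorAt]

lemma occursAt_iff {u : ℕ → A} {w : List A} {j : ℕ} :
    OccursAt u w j ↔ ∀ i, (h : i < w.length) → u (j + i) = w[i] := by
  unfold OccursAt factorAt
  constructor
  · intro h i hi
    have h2 : i < ((List.range w.length).map (fun i => u (j + i))).length := by simpa using hi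
    have := List.getElem_of_eq h h2
    simpa using this
  · intro h
    apply List.ext_getElem (by simp)
    intro i h1 h2
    simpa using h i h2

lemma factorAt_add (u : ℕ → A) (j m k : ℕ) :
    factorAt u j (m + k) = factorAt u j m ++ factorAt u (j + m) k := by
  apply List.ext_getElem (by simp [factorAt_length])
  intro i h1 h2
  rcases Nat.lt_or_ge i m with h | h
  · rw [List.getElem_append_left (by simpa [factorAt_length] using h)]
    simp [factorAt]
  · rw [List.getElem_append_right (by simpa [factorAt_length] using h)]
    have hi : i < m + k := by simpa [factorAt_length] using h1
    simp only [factorAt, List.getElem_map, List.getElem_range, List.length_map,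
      List.length_range]
    congr 1
    omega

lemma occursAt_factorAt (u : ℕ → A) (j n : ℕ) : OccursAt u (factorAt u j n) j := by
  simp [OccursAt, factorAt_length]

lemma factorAt_one (u : ℕ → A) (j : ℕ) : factorAt u j 1 = [u j] := by
  simp [factorAt, List.range_succ]

/-- Recurrence: every occurrence can be followed by a later one. -/
lemma exists_occ_gt {u : ℕ → A} (hrec : Recurrent u) {w : List A} {j : ℕ}
    (h : OccursAt u w j) : ∃ k, j < k ∧ OccursAt u w k := by
  obtain ⟨a, b, hab, _, hb⟩ := hrec (factorAt u 0 (j + w.length)) ⟨0, occursAt_factorAt u 0 _⟩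
  refine ⟨b + j, by omega, ?_⟩
  rw [occursAt_iff] at h ⊢
  intro i hi
  have hb' := (occursAt_iff.mp hb) (j + i) (by simp [factorAt_length]; omega)
  have : (factorAt u 0 (j + w.length))[j + i]'(by simp [factorAt_length]; omega) = u (j + i) := by
    simp [factorAt]
  rw [this] at hb'
  rw [show b + j + i = b + (j + i) by omega, hb']
  exact h i hi

lemma occ_unbounded {u : ℕ → A} (hrec : Recurrent u) {w : List A} (hw : IsFactor u w) :
    ∀ J, ∃ k, J < k ∧ OccursAt u w k := by
  intro J
  induction J with
  | zero =>
    obtain ⟨j, hj⟩ := hw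
    obtain ⟨k, hk, h⟩ := exists_occ_gt hrec hj
    exact ⟨k, by omega, h⟩
  | succ J ih =>
    obtain ⟨k, hk, h⟩ := ih
    rcases Nat.lt_or_ge (J + 1) k with h' | h'
    · exact ⟨k, h', h⟩
    · obtain ⟨k', hk', h''⟩ := exists_occ_gt hrec h
      exact ⟨k', by omega, h''⟩

lemma exists_next {u : ℕ → A} (hrec : Recurrent u) {w : List A} {j : ℕ}
    (h : OccursAt u w j) :
    ∃ k, j < k ∧ OccursAt u w k ∧ ∀ l, j < l → l < k → ¬ OccursAt u w l := by
  classical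
  have hne : ∃ k, j < k ∧ OccursAt u w k := exists_occ_gt hrec h
  refine ⟨Nat.find hne, (Nat.find_spec hne).1, (Nat.find_spec hne).2, ?_⟩
  intro l hl1 hl2 hocc
  exact absurd ⟨hl1, hocc⟩ (Nat.find_min hne hl2)

/-- The canonical return word at an occurrence `j`, together with its properties. -/
lemma returnWord_spec {u : ℕ → A} (hrec : Recurrent u) {w : List A} {j : ℕ}
    (h : OccursAt u w j) :
    ∃ k, j < k ∧ OccursAt u w k ∧ factorAt u j (k - j) ∈ returnWords u w ∧
      StartsWithLetter w (factorAt u j (k - j)) (u (j + w.length)) ∧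
      u (j + w.length) ∈ rightExt u w := by
  obtain ⟨k, hjk, hk, hmin⟩ := exists_next hrec h
  have hwj : factorAt u j w.length = w := h
  have hwk : factorAt u k w.length = w := hk
  have happ : factorAt u j (k - j) ++ w = factorAt u j ((k - j) + w.length) := by
    rw [factorAt_add]
    congr 1
    rw [show j + (k - j) = k by omega]
    exact hwk.symm
  have hwb : w ++ [u (j + w.length)] = factorAt u j (w.length + 1) := by
    rw [factorAt_add, hwj, factorAt_one]
  refine ⟨k, hjk, hk, ⟨j, k, hjk, h, hk, hmin, rfl⟩, ?_, ?_⟩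
  · unfold StartsWithLetter
    rw [happ, hwb]
    obtain ⟨d, hd⟩ : ∃ d, (k - j) + w.length = (w.length + 1) + d := ⟨k - j - 1, by omega⟩
    rw [hd, factorAt_add u j (w.length + 1) d]
    exact List.prefix_append _ _
  · refine ⟨j, ?_⟩
    unfold OccursAt
    rw [show (w ++ [u (j + w.length)]).length = w.length + 1 by simp, ← hwb]

/-- Consequence of maximality: two occurrences of `w` preceded by the same letter
are followed by the same letter. -/
lemma ext_det [Fintype A] {u : ℕ → A} {w : List A} (hmax : MaximalRightSpecial u w)
    {j1 j2 : ℕ} (h1 : OccursAt u w (j1 + 1)) (h2 : OccursAt u w (j2 + 1))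
    (ha : u j1 = u j2) :
    u (j1 + 1 + w.length) = u (j2 + 1 + w.length) := by
  by_contra hne
  set s : List A := u j1 :: w with hs
  have hslen : s.length = w.length + 1 := by simp [hs]
  have hfact : ∀ j : ℕ, OccursAt u w (j + 1) → u j = u j1 →
      OccursAt u (s ++ [u (j + 1 + w.length)]) j := by
    intro j hj haj
    have e1 : factorAt u j (1 + (w.length + 1)) =
        [u j] ++ (factorAt u (j + 1) w.length ++ factorAt u (j + 1 + w.length) 1) := by
      rw [factorAt_add, factorAt_one, factorAt_add]
    unfold OccursAt
    rw [show (s ++ [u (j + 1 + w.length)]).length = 1 + (w.length + 1) by simp [hslen]; omega]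
    rw [e1, hj, factorAt_one, hs, haj]
    simp
  have hb1 : u (j1 + 1 + w.length) ∈ rightExt u s := ⟨j1, hfact j1 h1 rfl⟩
  have hb2 : u (j2 + 1 + w.length) ∈ rightExt u s := ⟨j2, hfact j2 h2 ha.symm⟩
  have hrs : RightSpecial u s := by
    unfold RightSpecial
    have hsub : ({u (j1 + 1 + w.length), u (j2 + 1 + w.length)} : Set A) ⊆ rightExt u s := by
      rintro x (rfl | rfl)
      exacts [hb1, hb2]
    calc 2 = ({u (j1 + 1 + w.length), u (j2 + 1 + w.length)} : Set A).ncard :=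
          (Set.ncard_pair hne).symm
      _ ≤ (rightExt u s).ncard := Set.ncard_le_ncard hsub (Set.toFinite _)
  have hsf : IsFactor u s := by
    refine ⟨j1, ?_⟩
    have e1 : factorAt u j1 (1 + w.length) = [u j1] ++ factorAt u (j1 + 1) w.length := by
      rw [factorAt_add, factorAt_one]
    unfold OccursAt
    rw [show s.length = 1 + w.length by simp [hslen]; omega, e1, h1, hs]
    simp
  have := hmax.2.2 s hsf hrs (List.suffix_cons _ _)
  have := congrArg List.length this
  simp [hslen] at this

/-- Main induction: two occurrences of `w` followed by the same letter agree forever. -/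
lemma main_agree [Fintype A] {u : ℕ → A} (hrec : Recurrent u) {w : List A}
    (hmax : MaximalRightSpecial u w)
    (huniq : ∀ b ∈ rightExt u w, ∃! v, v ∈ returnWords u w ∧ StartsWithLetter w v b) :
    ∀ t j1 j2, OccursAt u w j1 → OccursAt u w j2 →
      u (j1 + w.length) = u (j2 + w.length) → u (j1 + t) = u (j2 + t) := by
  intro t
  induction t using Nat.strong_induction_on with
  | _ t ih =>
    intro j1 j2 h1 h2 hb
    obtain ⟨k1, hjk1, hk1, hmem1, hsw1, hbmem⟩ := returnWord_spec hrec h1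
    obtain ⟨k2, hjk2, hk2, hmem2, hsw2, _⟩ := returnWord_spec hrec h2
    rw [hb] at hsw1
    have hv : factorAt u j1 (k1 - j1) = factorAt u j2 (k2 - j2) := by
      obtain ⟨v, _, huv⟩ := huniq (u (j2 + w.length)) (hb ▸ hbmem)
      rw [huv _ ⟨hmem1, hsw1⟩, huv _ ⟨hmem2, hsw2⟩]
    have hlen : k1 - j1 = k2 - j2 := by
      have := congrArg List.length hv
      simpa [factorAt_length] using this
    set L := k1 - j1 with hL
    have hL1 : 1 ≤ L := by omega
    have hagree : ∀ i, i < L → u (j1 + i) = u (j2 + i) := by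
      intro i hi
      have o1 : OccursAt u (factorAt u j1 L) j1 := occursAt_factorAt u j1 L
      have o2 : OccursAt u (factorAt u j1 L) j2 := by
        rw [hv, ← hlen] at o1 ⊢
        exact occursAt_factorAt u j2 L
      have e1 := occursAt_iff.mp o1 i (by simp [factorAt_length]; omega)
      have e2 := occursAt_iff.mp o2 i (by simp [factorAt_length]; omega)
      rw [e1, e2]
    rcases Nat.lt_or_ge t L with ht | ht
    · exact hagree t ht
    · have ek1 : k1 = j1 + L := by omega
      have ek2 : k2 = j2 + L := by omega
      have hprev : u (j1 + L - 1) = u (j2 + L - 1) := by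
        have := hagree (L - 1) (by omega)
        rwa [show j1 + (L - 1) = j1 + L - 1 by omega,
          show j2 + (L - 1) = j2 + L - 1 by omega] at this
      have hocc1 : OccursAt u w ((j1 + L - 1) + 1) := by
        rw [show (j1 + L - 1) + 1 = k1 by omega]; exact hk1
      have hocc2 : OccursAt u w ((j2 + L - 1) + 1) := by
        rw [show (j2 + L - 1) + 1 = k2 by omega]; exact hk2
      have hnext := ext_det hmax hocc1 hocc2 hprev
      have hnext' : u (k1 + w.length) = u (k2 + w.length) := by
        rwa [show (j1 + L - 1) + 1 + w.length = k1 + w.length by omega,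
          show (j2 + L - 1) + 1 + w.length = k2 + w.length by omega] at hnext
      have := ih (t - L) (by omega) k1 k2 hk1 hk2 hnext'
      rwa [show k1 + (t - L) = j1 + t by omega,
        show k2 + (t - L) = j2 + t by omega] at this

end Aux

/-- If `u` is recurrent and `w` is a maximal right special factor such
that for every right extension `b` of `w` there is a unique return word of `w`
starting with `b`, then `u` is eventually periodic. -/
theorem eventuallyPeriodic_of_maximalRightSpecial [Fintype A] (u : ℕ → A) (hrec : Recurrent u)
    (w : List A) (hmax : MaximalRightSpecial u w)
    (huniq : ∀ b ∈ rightExt u w, ∃! v, v ∈ returnWords u w ∧ StartsWithLetter w v b) :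
    EventuallyPeriodic u := by
  have hSinf : {j | OccursAt u w j}.Infinite := by
    apply Set.infinite_of_not_bddAbove
    rintro ⟨M, hM⟩
    obtain ⟨k, hk, h⟩ := occ_unbounded hrec hmax.1 M
    exact absurd (hM h) (by omega)
  obtain ⟨j1, hj1, j2, hj2, hne, heq⟩ :=
    hSinf.exists_ne_map_eq_of_mapsTo (f := fun j => u (j + w.length))
      (t := (Set.univ : Set A)) (fun _ _ => trivial) Set.finite_univ
  have key : ∀ (a b : ℕ), a ∈ {j | OccursAt u w j} → b ∈ {j | OccursAt u w j} →
      a < b → u (a + w.length) = u (b + w.length) → EventuallyPeriodic u := by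
    intro a b ha hb hab habeq
    refine ⟨b - a, by omega, a, fun m hm => ?_⟩
    have e1 : m + (b - a) = b + (m - a) := by omega
    have e2 : m = a + (m - a) := by omega
    calc u (m + (b - a)) = u (b + (m - a)) := by rw [e1]
      _ = u (a + (m - a)) := (main_agree hrec hmax huniq (m - a) a b ha hb habeq).symm
      _ = u m := by rw [← e2]
  rcases hne.lt_or_gt with h | h
  · exact key j1 j2 hj1 hj2 h heq
  · exact key j2 j1 hj2 hj1 h heq.symm
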